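/- arXiv:1603.01086 — 4 statements merged into one kernel-verified Lean document; each statement's English description precedes it below -/
import Mathlib

section
/- If a set 𝒞 ⊆ ω^ω admits a Π⁰₁ modulus, then 𝒞 is Π⁰₁ encodable. -/
namespace Paper

/-- Partial recursiveness relative to an oracle `O : ℕ → ℕ`:
the usual inductive definition of `Nat.Partrec` with an extra constructor for the oracle. -/
inductive RecursiveIn (O : ℕ → ℕ) : (ℕ →. ℕ) → Prop
  | zero : RecursiveIn O (pure 0)
  | succ : RecursiveIn O Nat.succ
  | left : RecursiveIn O ↑fun n : ℕ => n.unpair.1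
  | right : RecursiveIn O ↑fun n : ℕ => n.unpair.2
  | oracle : RecursiveIn O ↑O
  | pair {f g} : RecursiveIn O f → RecursiveIn O g →
      RecursiveIn O fun n => Nat.pair <$> f n <*> g n
  | comp {f g} : RecursiveIn O f → RecursiveIn O g →
      RecursiveIn O fun n => g n >>= f
  | prec {f g} : RecursiveIn O f → RecursiveIn O g →
      RecursiveIn O (Nat.unpaired fun a n =>
        n.rec (f a) fun y IH => do let i ← IH; g (Nat.pair a (Nat.pair y i)))
  | rfind {f} : RecursiveIn O f →
      RecursiveIn O fun a => Nat.rfind fun n => (fun m => m = 0) <$> f (Nat.pair a n)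

/-- `f : α →. σ` is partial recursive in the oracle `O`. -/
def PartrecIn (O : ℕ → ℕ) {α σ : Type} [Primcodable α] [Primcodable σ] (f : α →. σ) : Prop :=
  RecursiveIn O fun n =>
    Part.bind (Encodable.decode (α := α) n) fun a => (f a).map Encodable.encode

/-- `f : α → σ` is computable in the oracle `O`. -/
def ComputableIn (O : ℕ → ℕ) {α σ : Type} [Primcodable α] [Primcodable σ] (f : α → σ) : Prop :=
  PartrecIn O (f : α →. σ)

/-- The characteristic function of a set of naturals, used as an oracle. -/
noncomputable def setOracle (X : Set ℕ) : ℕ → ℕ := by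
  classical exact fun n => if n ∈ X then 1 else 0

/-- The initial segment `X↾n` of an element of Baire space, as a finite sequence. -/
def initSeg (X : ℕ → ℕ) (n : ℕ) : List ℕ := List.ofFn fun i : Fin n => X i

/-- `D ⊆ ω^ω` is a `O`-computably bounded `Π⁰₁(O)` class: `D = [T]` for an `O`-computable
tree `T ⊆ ω^{<ω}` whose nodes are bounded by an `O`-computable function. -/
def IsCBPi01In (O : ℕ → ℕ) (D : Set (ℕ → ℕ)) : Prop :=
  ∃ T : List ℕ → Bool,
    ComputableIn O T ∧
    (∀ σ τ : List ℕ, τ <+: σ → T σ = true → T τ = true) ∧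
    (∃ b : ℕ → ℕ, ComputableIn O b ∧
      ∀ σ : List ℕ, T σ = true → ∀ i : Fin σ.length, σ.get i ≤ b i.val) ∧
    D = {X | ∀ n : ℕ, T (initSeg X n) = true}

/-- `C ⊆ ω^ω` is `Π⁰₁` encodable: every infinite `X ⊆ ω` has an infinite subset `Y`
such that `C` admits a non-empty `Y`-computably bounded `Π⁰₁(Y)` subset. -/
def Pi01Encodable (C : Set (ℕ → ℕ)) : Prop :=
  ∀ X : Set ℕ, X.Infinite →
    ∃ Y : Set ℕ, Y ⊆ X ∧ Y.Infinite ∧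
      ∃ D : Set (ℕ → ℕ), D.Nonempty ∧ D ⊆ C ∧ IsCBPi01In (setOracle Y) D

/-- `f` is a `Π⁰₁` modulus of `C`: for every `g ≥ f`, `C` has a non-empty
`g`-computably bounded `Π⁰₁(g)` subset. -/
def IsPi01Modulus (f : ℕ → ℕ) (C : Set (ℕ → ℕ)) : Prop :=
  ∀ g : ℕ → ℕ, (∀ n, f n ≤ g n) →
    ∃ D : Set (ℕ → ℕ), D.Nonempty ∧ D ⊆ C ∧ IsCBPi01In g D

/-- `D ⊆ ω^ω` is `Σ¹₁(O)`. -/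
def IsSigma11In (O : ℕ → ℕ) (D : Set (ℕ → ℕ)) : Prop :=
  ∃ R : List ℕ × List ℕ × ℕ → Bool,
    ComputableIn O R ∧
    D = {X | ∃ Y : ℕ → ℕ, ∀ z : ℕ, R (initSeg X z, initSeg Y z, z) = true}

/-- `D ⊆ ω^ω` is `Σ¹₁`. -/
def IsSigma11 (D : Set (ℕ → ℕ)) : Prop :=
  ∃ R : List ℕ × List ℕ × ℕ → Bool,
    Computable R ∧
    D = {X | ∃ Y : ℕ → ℕ, ∀ z : ℕ, R (initSeg X z, initSeg Y z, z) = true}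

/-- `A ∈ ω^ω` is computably encodable. -/
def ComputablyEncodable (A : ℕ → ℕ) : Prop :=
  ∀ X : Set ℕ, X.Infinite →
    ∃ Y : Set ℕ, Y ⊆ X ∧ Y.Infinite ∧ ComputableIn (setOracle Y) A

/-- `f` is a modulus of `A`: every `g ≥ f` computes `A`. -/
def IsModulus (f : ℕ → ℕ) (A : ℕ → ℕ) : Prop :=
  ∀ g : ℕ → ℕ, (∀ n, f n ≤ g n) → ComputableIn g A

/-- The cylinder `[σ]` of elements of Baire space extending `σ`. -/
def cyl (σ : List ℕ) : Set (ℕ → ℕ) := {X | initSeg X σ.length = σ}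

/-
Thin `X` out to an infinite `Y` whose elements `a < b` satisfy `f m ≤ b` for all `m ≤ a`.
By unbounded search the characteristic function of `Y` computes, for every `x`, an element
`s x ≥ x` of `Y`; then `g n = s (s n + 1)` lies in `Y` above the element `s n ≥ n`, so `g`
dominates `f`. The modulus yields a non-empty `g`-computably bounded `Π⁰₁(g)` subset of `C`, and
its tree and bound stay computable once the oracle `g` is replaced by `Y`, which computes `g`.
-/

namespace RecursiveIn

variable {O : ℕ → ℕ}

theorem of_partrec {f : ℕ →. ℕ} (h : Nat.Partrec f) : RecursiveIn O f := by
  induction h with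
  | zero => exact .zero
  | succ => exact .succ
  | left => exact .left
  | right => exact .right
  | pair _ _ hf hg => exact .pair hf hg
  | comp _ _ hf hg => exact .comp hf hg
  | prec _ _ hf hg => exact .prec hf hg
  | rfind _ hf => exact .rfind hf

theorem of_primrec {f : ℕ → ℕ} (h : Primrec f) : RecursiveIn O ↑f :=
  of_partrec (Nat.Partrec.of_primrec (Primrec.nat_iff.mp h))

theorem subst {O' : ℕ → ℕ} {f : ℕ →. ℕ} (h : RecursiveIn O f) (hO : RecursiveIn O' ↑O) :
    RecursiveIn O' f := by
  induction h with
  | zero => exact .zero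
  | succ => exact .succ
  | left => exact .left
  | right => exact .right
  | oracle => exact hO
  | pair _ _ hf hg => exact .pair hf hg
  | comp _ _ hf hg => exact .comp hf hg
  | prec _ _ hf hg => exact .prec hf hg
  | rfind _ hf => exact .rfind hf

theorem of_eq {f g : ℕ →. ℕ} (hf : RecursiveIn O f) (h : ∀ n, f n = g n) : RecursiveIn O g :=
  funext h ▸ hf

theorem comp_total {f g : ℕ → ℕ} (hf : RecursiveIn O ↑f) (hg : RecursiveIn O ↑g) :
    RecursiveIn O ↑(f ∘ g) :=
  hf.comp hg |>.of_eq fun n => Part.bind_some (g n) (f : ℕ →. ℕ)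

theorem pair_total {f g : ℕ → ℕ} (hf : RecursiveIn O ↑f) (hg : RecursiveIn O ↑g) :
    RecursiveIn O ↑(fun n => Nat.pair (f n) (g n)) :=
  hf.pair hg |>.of_eq fun n => by simp [PFun.coe_val, Seq.seq]

theorem nat_find {p : ℕ → ℕ} (hp : RecursiveIn O ↑p)
    (h : ∀ a, ∃ n, p (Nat.pair a n) = 0) : RecursiveIn O ↑(fun a => Nat.find (h a)) := by
  refine hp.rfind.of_eq fun a => ?_
  refine Part.eq_some_iff.2 (Nat.mem_rfind.2 ⟨?_, fun hm => ?_⟩)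
  · simpa [PFun.coe_val] using Nat.find_spec (h a)
  · simpa [PFun.coe_val] using Nat.find_min (h a) hm

end RecursiveIn

theorem IsCBPi01In.subst {O O' : ℕ → ℕ} {D : Set (ℕ → ℕ)} (hD : IsCBPi01In O D)
    (hO : RecursiveIn O' ↑O) : IsCBPi01In O' D := by
  obtain ⟨T, hT, hTree, ⟨b, hb, hTb⟩, rfl⟩ := hD
  exact ⟨T, RecursiveIn.subst hT hO, hTree, ⟨b, RecursiveIn.subst hb hO, hTb⟩, rfl⟩

theorem one_sub_setOracle_eq_zero {Y : Set ℕ} {n : ℕ} : 1 - setOracle Y n = 0 ↔ n ∈ Y := by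
  unfold setOracle
  split_ifs with h <;> simp [h]

theorem exists_recursiveIn_setOracle_ge {Y : Set ℕ} (hY : Y.Infinite) :
    ∃ s : ℕ → ℕ, RecursiveIn (setOracle Y) ↑s ∧ (∀ x, s x ∈ Y) ∧ ∀ x, x ≤ s x := by
  have hadd : RecursiveIn (setOracle Y) ↑fun k : ℕ => k.unpair.1 + k.unpair.2 :=
    .of_primrec <| Primrec.nat_add.comp (Primrec.fst.comp .unpair) (Primrec.snd.comp .unpair)
  -- `p (Nat.pair x k) = 0` iff `x + k ∈ Y`
  set p : ℕ → ℕ := fun k => 1 - setOracle Y (k.unpair.1 + k.unpair.2)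
  have hp : RecursiveIn (setOracle Y) ↑p :=
    (RecursiveIn.of_primrec (Primrec.nat_sub.comp (.const 1) .id)).comp_total
      (RecursiveIn.oracle.comp_total hadd)
  have hgap : ∀ x, ∃ k, p (Nat.pair x k) = 0 := fun x => by
    obtain ⟨m, hmY, hxm⟩ := hY.exists_gt x
    exact ⟨m - x, by simpa [p, one_sub_setOracle_eq_zero, Nat.add_sub_cancel' hxm.le]⟩
  refine ⟨fun x => x + Nat.find (hgap x), ?_, fun x => ?_, fun x => Nat.le_add_right _ _⟩
  · refine hadd.comp_total ((RecursiveIn.of_primrec .id).pair_total (.nat_find hp hgap))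
      |>.of_eq fun x => ?_
    simp
  · simpa [p, one_sub_setOracle_eq_zero] using Nat.find_spec (hgap x)

theorem exists_sparse_subset_of_infinite (F : ℕ → ℕ) {X : Set ℕ} (hX : X.Infinite) :
    ∃ Y ⊆ X, Y.Infinite ∧ ∀ a ∈ Y, ∀ b ∈ Y, a < b → F a ≤ b := by
  choose next hnextX hlt_next using hX.exists_gt
  let y : ℕ → ℕ := fun k => Nat.rec (next 0) (fun _ a => next (max a (F a))) k
  have hy_succ (k : ℕ) : y k < y (k + 1) ∧ F (y k) ≤ y (k + 1) := by
    have : y (k + 1) = next (max (y k) (F (y k))) := rfl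
    have := hlt_next (max (y k) (F (y k)))
    omega
  have hy : StrictMono y := strictMono_nat_of_lt_succ fun k => (hy_succ k).1
  refine ⟨Set.range y, ?_, Set.infinite_range_of_injective hy.injective, ?_⟩
  · rintro _ ⟨k, rfl⟩
    cases k <;> exact hnextX _
  · rintro _ ⟨i, rfl⟩ _ ⟨j, rfl⟩ hij
    exact (hy_succ i).2.trans (hy.monotone (hy.lt_iff_lt.mp hij))

theorem exists_subset_recursiveIn_setOracle_dominating (f : ℕ → ℕ) {X : Set ℕ}
    (hX : X.Infinite) : ∃ Y ⊆ X, Y.Infinite ∧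
      ∃ g : ℕ → ℕ, RecursiveIn (setOracle Y) ↑g ∧ ∀ n, f n ≤ g n := by
  obtain ⟨Y, hYX, hY, hsparse⟩ :=
    exists_sparse_subset_of_infinite (fun a => (Finset.range (a + 1)).sup f) hX
  obtain ⟨s, hs, hsY, hle_s⟩ := exists_recursiveIn_setOracle_ge hY
  refine ⟨Y, hYX, hY, s ∘ Nat.succ ∘ s, hs.comp_total (RecursiveIn.succ.comp_total hs),
    fun n => ?_⟩
  calc f n ≤ (Finset.range (s n + 1)).sup f :=
        Finset.le_sup (Finset.mem_range_succ_iff.2 (hle_s n))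
    _ ≤ s (s n + 1) := hsparse _ (hsY n) _ (hsY _) (hle_s _)

/-- If `C ⊆ ω^ω` admits a `Π⁰₁` modulus, then `C` is `Π⁰₁` encodable. -/
theorem pi01Encodable_of_pi01Modulus (C : Set (ℕ → ℕ))
    (h : ∃ f : ℕ → ℕ, IsPi01Modulus f C) : Pi01Encodable C := by
  obtain ⟨f, hf⟩ := h
  intro X hX
  obtain ⟨Y, hYX, hY, g, hg, hfg⟩ := exists_subset_recursiveIn_setOracle_dominating f hX
  obtain ⟨D, hD, hDC, hDg⟩ := hf g hfg
  exact ⟨Y, hYX, hY, D, hD, hDC, hDg.subst hg⟩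

end Paper
end

section
/- (Σ¹₁-immunity basis theorem) For every compact set 𝒞 ⊆ ω^ω with no non-empty Σ¹₁ subset, and every non-empty Σ¹₁ set 𝒟 ⊆ ω^ω, there is some X ∈ 𝒟 such that 𝒞 has no non-empty Σ¹₁(X) subset. -/
namespace Paper

/-!
Σ¹₁ forcing. A condition is a satisfiable finite list of constraints on a real `W` that codes
`X` together with witnesses. Given a condition and an index `c`, the set of points that some `X`
allowed by the condition puts into the `c`-th `Σ¹₁(X)` set is lightface `Σ¹₁`, because
membership certificates (witness, step counts, oracle uses) are checked by finite
approximations. If this set is empty, the condition already forces the `c`-th `Σ¹₁(X)` set to be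
empty. Otherwise it is not contained in `C`, so we commit to a certified point outside `C` and to
an initial segment of it that keeps it outside the closed set `C`. Deciding every index in turn
while freezing ever longer initial segments of `W` gives a limit satisfying every condition, and
the first condition puts `X` into `D`.
-/

open Filter
open Nat.Partrec (Code)
open Nat.Partrec.Code Encodable

@[simp] theorem initSeg_length (X : ℕ → ℕ) (n : ℕ) : (initSeg X n).length = n := by
  simp [initSeg]

theorem initSeg_getElem? (X : ℕ → ℕ) (n j : ℕ) :
    (initSeg X n)[j]? = if j < n then some (X j) else none := by
  split_ifs with h
  · simp [initSeg, h]
  · exact List.getElem?_eq_none (by simpa using Nat.le_of_not_lt h)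

theorem initSeg_getD (X : ℕ → ℕ) {n j : ℕ} (h : j < n) : (initSeg X n).getD j 0 = X j := by
  rw [List.getD_eq_getElem?_getD, initSeg_getElem?, if_pos h, Option.getD_some]

theorem initSeg_eq_initSeg_iff {X Y : ℕ → ℕ} {n : ℕ} :
    initSeg X n = initSeg Y n ↔ ∀ j < n, X j = Y j := by
  refine ⟨fun h j hj => ?_, fun h => List.ext_getElem? fun j => ?_⟩
  · simpa only [initSeg_getElem?, if_pos hj, Option.some_inj] using congrArg (·[j]?) h
  · simp only [initSeg_getElem?]
    split_ifs with hj
    · rw [h j hj]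
    · rfl

theorem initSeg_take (X : ℕ → ℕ) {m n : ℕ} (h : m ≤ n) : (initSeg X n).take m = initSeg X m :=
  List.ext_getElem? fun j => by
    simp only [List.getElem?_take, initSeg_getElem?]
    split_ifs <;> first | rfl | omega

theorem initSeg_eq_of_le {X Y : ℕ → ℕ} {m n : ℕ} (h : initSeg X n = initSeg Y n) (hmn : m ≤ n) :
    initSeg X m = initSeg Y m := by
  rw [← initSeg_take X hmn, h, initSeg_take Y hmn]

def row (W : ℕ → ℕ) (i : ℕ) : ℕ → ℕ := fun k => W (Nat.pair i k)

theorem initSeg_row (W : ℕ → ℕ) (i m : ℕ) :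
    initSeg (row W i) m =
      (List.range m).map fun k => (initSeg W (Nat.pair i m)).getD (Nat.pair i k) 0 :=
  List.ext_getElem? fun j => by
    rw [initSeg_getElem?, List.getElem?_map]
    split_ifs with hj
    · rw [List.getElem?_range hj, Option.map_some,
        initSeg_getD W (Nat.pair_lt_pair_right i hj)]
      rfl
    · rw [List.getElem?_eq_none (by simpa using Nat.le_of_not_lt hj), Option.map_none]

theorem initSeg_row_eq_of_initSeg_eq {V W : ℕ → ℕ} {i m : ℕ}
    (h : initSeg V (Nat.pair i m) = initSeg W (Nat.pair i m)) :
    initSeg (row V i) m = initSeg (row W i) m :=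
  initSeg_eq_initSeg_iff.2 fun _ hk => initSeg_eq_initSeg_iff.1 h _ (Nat.pair_lt_pair_right i hk)

structure UseApprox (O : ℕ → ℕ) (f : ℕ →. ℕ) (F : List ℕ × ℕ →. ℕ) : Prop where
  sound : ∀ {k n v}, v ∈ F (initSeg O k, n) → v ∈ f n
  complete : ∀ {n v}, v ∈ f n → ∀ᶠ k in atTop, v ∈ F (initSeg O k, n)

theorem Part.mem_pair_seq_iff {x y : Part ℕ} {v : ℕ} :
    v ∈ Nat.pair <$> x <*> y ↔ ∃ a ∈ x, ∃ b ∈ y, Nat.pair a b = v := by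
  simp only [Seq.seq, Part.map_eq_map, Part.mem_bind_iff, Part.mem_map_iff]
  constructor
  · rintro ⟨_, ⟨a, ha, rfl⟩, b, hb, rfl⟩
    exact ⟨a, ha, b, hb, rfl⟩
  · rintro ⟨a, ha, b, hb, rfl⟩
    exact ⟨_, ⟨a, ha, rfl⟩, b, hb, rfl⟩

theorem Nat.mem_rfind_of_forall_mem {p q : ℕ →. Bool} (h : ∀ m b, b ∈ p m → b ∈ q m) {v : ℕ}
    (hv : v ∈ Nat.rfind p) : v ∈ Nat.rfind q := by
  obtain ⟨htrue, hfalse⟩ := Nat.mem_rfind.1 hv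
  exact Nat.mem_rfind.2 ⟨h _ _ htrue, fun hm => h _ _ (hfalse hm)⟩

namespace UseApprox

variable {O : ℕ → ℕ} {f g : ℕ →. ℕ} {F G : List ℕ × ℕ →. ℕ}

theorem of_oracle_free (f : ℕ →. ℕ) : UseApprox O f fun p => f p.2 :=
  ⟨id, fun hv => Eventually.of_forall fun _ => hv⟩

theorem oracle (O : ℕ → ℕ) : UseApprox O (O : ℕ →. ℕ) fun p => (p.1[p.2]? : Part ℕ) where
  sound {k n v} hv := by
    rw [Part.mem_ofOption, Option.mem_def, initSeg_getElem?] at hv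
    split_ifs at hv
    exact (Option.some_inj.1 hv) ▸ Part.mem_some _
  complete {n v} hv := by
    filter_upwards [eventually_gt_atTop n] with k hk
    rw [Part.mem_ofOption, Option.mem_def, initSeg_getElem?, if_pos hk, Part.mem_some_iff.1 hv]

theorem pair (hf : UseApprox O f F) (hg : UseApprox O g G) :
    UseApprox O (fun n => Nat.pair <$> f n <*> g n) fun p => Nat.pair <$> F p <*> G p where
  sound hv := by
    obtain ⟨a, ha, b, hb, rfl⟩ := Part.mem_pair_seq_iff.1 hv
    exact Part.mem_pair_seq_iff.2 ⟨a, hf.sound ha, b, hg.sound hb, rfl⟩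
  complete hv := by
    obtain ⟨a, ha, b, hb, rfl⟩ := Part.mem_pair_seq_iff.1 hv
    filter_upwards [hf.complete ha, hg.complete hb] with k hak hbk
    exact Part.mem_pair_seq_iff.2 ⟨a, hak, b, hbk, rfl⟩

theorem comp (hf : UseApprox O f F) (hg : UseApprox O g G) :
    UseApprox O (fun n => g n >>= f) fun p => G p >>= fun y => F (p.1, y) where
  sound hv := by
    obtain ⟨y, hy, hv⟩ := Part.mem_bind_iff.1 hv
    exact Part.mem_bind_iff.2 ⟨y, hg.sound hy, hf.sound hv⟩
  complete hv := by
    obtain ⟨y, hy, hv⟩ := Part.mem_bind_iff.1 hv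
    filter_upwards [hg.complete hy, hf.complete hv] with k hyk hvk
    exact Part.mem_bind_iff.2 ⟨y, hyk, hvk⟩

theorem rfind (hf : UseApprox O f F) :
    UseApprox O (fun a => Nat.rfind fun n => (fun m => m = 0) <$> f (Nat.pair a n))
      fun p => Nat.rfind fun n => (fun m => m = 0) <$> F (p.1, Nat.pair p.2 n) where
  sound hv := Nat.mem_rfind_of_forall_mem (fun _ _ hb => by
    obtain ⟨m, hm, rfl⟩ := Part.mem_map_iff _ |>.1 hb
    exact Part.mem_map _ (hf.sound hm)) hv
  complete {a v} hv := by
    have hmap : ∀ {m b}, b ∈ (fun m => decide (m = 0)) <$> f (Nat.pair a m) →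
        ∀ᶠ k in atTop, b ∈ (fun m => decide (m = 0)) <$> F (initSeg O k, Nat.pair a m) := by
      intro m b hb
      obtain ⟨w, hw, rfl⟩ := Part.mem_map_iff _ |>.1 hb
      exact (hf.complete hw).mono fun k hk => Part.mem_map _ hk
    obtain ⟨htrue, hfalse⟩ := Nat.mem_rfind.1 hv
    have hlt : ∀ᶠ k in atTop, ∀ m ∈ Set.Iio v,
        false ∈ (fun m => decide (m = 0)) <$> F (initSeg O k, Nat.pair a m) :=
      (eventually_all_finite (Set.finite_Iio v)).2 fun m hm => hmap (hfalse hm)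
    filter_upwards [hmap htrue, hlt] with k hk hk'
    exact Nat.mem_rfind.2 ⟨hk, fun hm => hk' _ hm⟩

theorem prec (hf : UseApprox O f F) (hg : UseApprox O g G) :
    UseApprox O (Nat.unpaired fun a n =>
        n.rec (f a) fun y IH => do let i ← IH; g (Nat.pair a (Nat.pair y i)))
      fun p => p.2.unpair.2.rec (F (p.1, p.2.unpair.1)) fun y IH =>
        IH.bind fun i => G (p.1, Nat.pair p.2.unpair.1 (Nat.pair y i)) where
  sound {k p v} hv := by
    change v ∈ Nat.rec (motive := fun _ => Part ℕ) (f p.unpair.1) _ p.unpair.2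
    generalize p.unpair.2 = n at hv ⊢
    induction n generalizing v with
    | zero => exact hf.sound hv
    | succ n ih =>
      obtain ⟨i, hi, hv⟩ := Part.mem_bind_iff.1 hv
      exact Part.mem_bind_iff.2 ⟨i, ih hi, hg.sound hv⟩
  complete {p v} hv := by
    change v ∈ Nat.rec (motive := fun _ => Part ℕ) (f p.unpair.1) _ p.unpair.2 at hv
    dsimp only
    generalize p.unpair.2 = n at hv ⊢
    induction n generalizing v with
    | zero => exact hf.complete hv
    | succ n ih =>
      obtain ⟨i, hi, hv⟩ := Part.mem_bind_iff.1 hv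
      filter_upwards [ih hi, hg.complete hv] with k hik hvk
      exact Part.mem_bind_iff.2 ⟨i, hik, hvk⟩

end UseApprox

theorem RecursiveIn.exists_useApprox {O : ℕ → ℕ} {f : ℕ →. ℕ} (h : RecursiveIn O f) :
    ∃ F : List ℕ × ℕ →. ℕ, Partrec F ∧ UseApprox O f F := by
  induction h with
  | zero => exact ⟨_, (Partrec.nat_iff.2 .zero).comp Computable.snd, .of_oracle_free _⟩
  | succ => exact ⟨_, (Partrec.nat_iff.2 .succ).comp Computable.snd, .of_oracle_free _⟩
  | left => exact ⟨_, (Partrec.nat_iff.2 .left).comp Computable.snd, .of_oracle_free _⟩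
  | right => exact ⟨_, (Partrec.nat_iff.2 .right).comp Computable.snd, .of_oracle_free _⟩
  | oracle =>
    exact ⟨_, Computable.ofOption (Computable.list_getElem?.comp .fst .snd), .oracle O⟩
  | pair _ _ ihf ihg =>
    obtain ⟨F, hF, hFf⟩ := ihf
    obtain ⟨G, hG, hGg⟩ := ihg
    refine ⟨_, ?_, hFf.pair hGg⟩
    exact (hF.bind ((hG.comp Computable.fst).map
      (Primrec₂.natPair.comp (Primrec.snd.comp Primrec.fst) Primrec.snd).to_comp.to₂).to₂).of_eq
      fun p => by simp [Seq.seq]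
  | comp _ _ ihf ihg =>
    obtain ⟨F, hF, hFf⟩ := ihf
    obtain ⟨G, hG, hGg⟩ := ihg
    exact ⟨_, hG.bind (hF.comp ((Computable.fst.comp .fst).pair .snd)).to₂, hFf.comp hGg⟩
  | prec _ _ ihf ihg =>
    obtain ⟨F, hF, hFf⟩ := ihf
    obtain ⟨G, hG, hGg⟩ := ihg
    refine ⟨_, ?_, hFf.prec hGg⟩
    have hstep : Computable fun q : (List ℕ × ℕ) × ℕ × ℕ =>
        (q.1.1, Nat.pair q.1.2.unpair.1 (Nat.pair q.2.1 q.2.2)) :=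
      (Computable.fst.comp .fst).pair (Primrec₂.natPair.comp
        (Primrec.fst.comp (Primrec.unpair.comp (Primrec.snd.comp .fst)))
        (Primrec₂.natPair.comp (Primrec.fst.comp .snd) (Primrec.snd.comp .snd))).to_comp
    exact Partrec.nat_rec (Primrec.snd.comp (Primrec.unpair.comp .snd)).to_comp
      (hF.comp (Computable.fst.pair (Primrec.fst.comp (Primrec.unpair.comp .snd)).to_comp))
      (hG.comp hstep).to₂
  | rfind _ ihf =>
    obtain ⟨F, hF, hFf⟩ := ihf
    refine ⟨_, Partrec.rfind ?_, hFf.rfind⟩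
    exact (hF.comp ((Computable.fst.comp .fst).pair
      (Primrec₂.natPair.comp (Primrec.snd.comp .fst) .snd).to_comp)).map
      (Primrec.eq.comp Primrec.snd (Primrec.const 0)).decide.to_comp.to₂

section Codes

variable {α σ : Type} [Primcodable α] [Primcodable σ]

def ComputesFromInitSeg (c : Code) (X : ℕ → ℕ) (f : α → σ) : Prop :=
  (∀ a k v, v ∈ eval c (encode (initSeg X k, encode a)) → v = encode (f a)) ∧
  ∀ a, ∃ k, encode (f a) ∈ eval c (encode (initSeg X k, encode a))

theorem Partrec.exists_code_eval {F : List ℕ × ℕ →. ℕ} (hF : Partrec F) :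
    ∃ c : Code, ∀ τ n, eval c (encode (τ, n)) = F (τ, n) := by
  obtain ⟨c, hc⟩ := exists_code.1 hF
  exact ⟨c, fun τ n => by simp [hc, Part.map_id']⟩

theorem computesFromInitSeg_of_useApprox {c : Code} {X : ℕ → ℕ} {f : α → σ}
    {F : List ℕ × ℕ →. ℕ} (hc : ∀ τ n, eval c (encode (τ, n)) = F (τ, n))
    (hF : UseApprox X
      (fun n => Part.bind (decode (α := α) n) fun a => ((f : α →. σ) a).map encode) F) :
    ComputesFromInitSeg c X f := by
  have hval : ∀ a v, v ∈ Part.bind (decode (α := α) (encode a))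
      (fun a => ((f : α →. σ) a).map encode) ↔ v = encode (f a) := by
    simp [encodek, PFun.coe_val]
  refine ⟨fun a k v hv => (hval a v).1 (hF.sound (hc _ _ ▸ hv)), fun a => ?_⟩
  obtain ⟨k, hk⟩ := (hF.complete ((hval a _).2 rfl)).exists
  exact ⟨k, hc _ _ ▸ hk⟩

theorem Computable.exists_computesFromInitSeg {f : α → σ} (hf : Computable f) :
    ∃ c, ∀ X, ComputesFromInitSeg c X f := by
  obtain ⟨c, hc⟩ := Partrec.exists_code_eval ((Partrec.nat_iff.2 hf).comp Computable.snd)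
  exact ⟨c, fun _ => computesFromInitSeg_of_useApprox hc (.of_oracle_free _)⟩

theorem ComputableIn.exists_computesFromInitSeg {X : ℕ → ℕ} {f : α → σ}
    (hf : ComputableIn X f) : ∃ c, ComputesFromInitSeg c X f := by
  obtain ⟨F, hF, hFf⟩ := RecursiveIn.exists_useApprox hf
  obtain ⟨c, hc⟩ := Partrec.exists_code_eval hF
  exact ⟨c, computesFromInitSeg_of_useApprox hc hFf⟩

end Codes

def certCheck (c : Code) (X Z Y H : ℕ → ℕ) (z : ℕ) : Bool :=
  decide (evaln (H z).unpair.1 c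
    (encode (initSeg X (H z).unpair.2, encode (initSeg Z z, initSeg Y z, z))) = some (encode true))

def IsCertificate (c : Code) (X Z Y H : ℕ → ℕ) : Prop := ∀ z, certCheck c X Z Y H z = true

theorem IsCertificate.sound {c : Code} {X Z Y H : ℕ → ℕ} {R : List ℕ × List ℕ × ℕ → Bool}
    (hc : ComputesFromInitSeg c X R) (hH : IsCertificate c X Z Y H) (z : ℕ) :
    R (initSeg Z z, initSeg Y z, z) = true := by
  have := hc.1 _ _ _ (evaln_sound (of_decide_eq_true (hH z)))
  exact encode_injective this.symm

theorem exists_isCertificate {c : Code} {X Z Y : ℕ → ℕ} {R : List ℕ × List ℕ × ℕ → Bool}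
    (hc : ComputesFromInitSeg c X R) (hR : ∀ z, R (initSeg Z z, initSeg Y z, z) = true) :
    ∃ H, IsCertificate c X Z Y H := by
  have : ∀ z, ∃ h : ℕ, certCheck c X Z Y (fun _ => h) z = true := fun z => by
    obtain ⟨k, hk⟩ := hc.2 (initSeg Z z, initSeg Y z, z)
    obtain ⟨s, hs⟩ := evaln_complete.1 hk
    exact ⟨Nat.pair s k, by simpa [certCheck, hR z] using hs⟩
  choose H hH using this
  exact ⟨H, hH⟩

def ComputableFunctional {α : Type} [Primcodable α] (Φ : (ℕ → ℕ) → (ℕ → ℕ) → ℕ → α) : Prop :=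
  ∃ φ : List ℕ × List ℕ × ℕ → Option α, Computable φ ∧
    (∀ X Y n z a, φ (initSeg X n, initSeg Y n, z) = some a → Φ X Y z = a) ∧
    ∀ X Y z, ∀ᶠ n in atTop, φ (initSeg X n, initSeg Y n, z) = some (Φ X Y z)

namespace ComputableFunctional

variable {α β γ : Type} [Primcodable α] [Primcodable β] [Primcodable γ]
  {Φ : (ℕ → ℕ) → (ℕ → ℕ) → ℕ → α} {Ψ : (ℕ → ℕ) → (ℕ → ℕ) → ℕ → β}

theorem const (a : α) : ComputableFunctional fun _ _ _ => a :=
  ⟨fun _ => some a, Computable.const _, fun _ _ _ _ _ h => Option.some_inj.1 h,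
    fun _ _ _ => Eventually.of_forall fun _ => rfl⟩

theorem index : ComputableFunctional fun _ _ z => z :=
  ⟨fun p => some p.2.2, Computable.option_some.comp (Computable.snd.comp .snd),
    fun _ _ _ _ _ h => Option.some_inj.1 h, fun _ _ _ => Eventually.of_forall fun _ => rfl⟩

theorem comp₂ {f : α → β → γ} (hf : Computable₂ f) (hΦ : ComputableFunctional Φ)
    (hΨ : ComputableFunctional Ψ) : ComputableFunctional fun X Y z => f (Φ X Y z) (Ψ X Y z) := by
  obtain ⟨φ, hφ, hφs, hφc⟩ := hΦ
  obtain ⟨ψ, hψ, hψs, hψc⟩ := hΨ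
  refine ⟨fun p => (φ p).bind fun a => (ψ p).map (f a),
    hφ.option_bind ((hψ.comp .fst).option_map (hf.comp (Computable.snd.comp .fst) .snd).to₂).to₂,
    fun X Y n z c h => ?_, fun X Y z => ?_⟩
  · obtain ⟨a, ha, b, hb, rfl⟩ : ∃ a, φ (initSeg X n, initSeg Y n, z) = some a ∧
        ∃ b, ψ (initSeg X n, initSeg Y n, z) = some b ∧ f a b = c := by
      simpa [Option.bind_eq_some_iff, Option.map_eq_some_iff] using h
    simp only [hφs _ _ _ _ _ ha, hψs _ _ _ _ _ hb]
  · filter_upwards [hφc X Y z, hψc X Y z] with n hφn hψn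
    simp [hφn, hψn]

theorem comp {f : α → β} (hf : Computable f) (hΦ : ComputableFunctional Φ) :
    ComputableFunctional fun X Y z => f (Φ X Y z) :=
  comp₂ (f := fun a (_ : α) => f a) (hf.comp .fst).to₂ hΦ hΦ

theorem pair (hΦ : ComputableFunctional Φ) (hΨ : ComputableFunctional Ψ) :
    ComputableFunctional fun X Y z => (Φ X Y z, Ψ X Y z) :=
  comp₂ Primrec₂.pair.to_comp hΦ hΨ

theorem swap (hΦ : ComputableFunctional Φ) : ComputableFunctional fun X Y => Φ Y X := by
  obtain ⟨φ, hφ, hφs, hφc⟩ := hΦ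
  exact ⟨fun p => φ (p.2.1, p.1, p.2.2),
    hφ.comp ((Computable.fst.comp .snd).pair (Computable.fst.pair (Computable.snd.comp .snd))),
    fun X Y n z => hφs Y X n z, fun X Y => hφc Y X⟩

theorem initSeg_right {Φ : (ℕ → ℕ) → (ℕ → ℕ) → ℕ → ℕ} (hΦ : ComputableFunctional Φ) :
    ComputableFunctional fun X Y z => initSeg Y (Φ X Y z) := by
  obtain ⟨φ, hφ, hφs, hφc⟩ := hΦ
  refine ⟨fun p => (φ p).bind fun m => if m ≤ p.2.1.length then some (p.2.1.take m) else none,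
    hφ.option_bind (Primrec.ite (Primrec.nat_le.comp .snd
      (Primrec.list_length.comp (Primrec.fst.comp (Primrec.snd.comp .fst))))
      (Primrec.option_some.comp (Primrec.list_take.comp .snd
        (Primrec.fst.comp (Primrec.snd.comp .fst)))) (Primrec.const none)).to_comp.to₂,
    fun X Y n z τ h => ?_, fun X Y z => ?_⟩
  · obtain ⟨m, hm, hmn, rfl⟩ : ∃ m, φ (initSeg X n, initSeg Y n, z) = some m ∧ m ≤ n ∧
        (initSeg Y n).take m = τ := by
      simpa [Option.bind_eq_some_iff] using h
    simp only [hφs _ _ _ _ _ hm, initSeg_take Y hmn]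
  · filter_upwards [hφc X Y z, eventually_ge_atTop (Φ X Y z)] with n hφn hn
    simp [hφn, hn, initSeg_take Y hn]

theorem apply_right {Φ : (ℕ → ℕ) → (ℕ → ℕ) → ℕ → ℕ} (hΦ : ComputableFunctional Φ) :
    ComputableFunctional fun X Y z => Y (Φ X Y z) := by
  have h := comp₂ (Primrec.list_getD 0).to_comp (hΦ.comp Computable.succ).initSeg_right hΦ
  simpa only [initSeg_getD _ (Nat.lt_succ_self _)] using h

theorem apply_left {Φ : (ℕ → ℕ) → (ℕ → ℕ) → ℕ → ℕ} (hΦ : ComputableFunctional Φ) :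
    ComputableFunctional fun X Y z => X (Φ X Y z) :=
  hΦ.swap.apply_right.swap

theorem initSeg_row_right {Φ : (ℕ → ℕ) → (ℕ → ℕ) → ℕ → ℕ} (hΦ : ComputableFunctional Φ)
    (i : ℕ) : ComputableFunctional fun X Y z => initSeg (row Y i) (Φ X Y z) := by
  have hrow : Computable₂ fun (τ : List ℕ) (m : ℕ) =>
      (List.range m).map fun k => τ.getD (Nat.pair i k) 0 :=
    (Primrec.list_map (Primrec.list_range.comp .snd) ((Primrec.list_getD 0).comp
      (Primrec.fst.comp .fst) (Primrec₂.natPair.comp (Primrec.const i) .snd)).to₂).to_comp.to₂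
  have h := comp₂ hrow (hΦ.comp₂ (Primrec₂.natPair.comp (Primrec.const i) .fst).to_comp.to₂
    hΦ).initSeg_right hΦ
  simpa only [← initSeg_row] using h

theorem exists_initSeg_eq (hΦ : ComputableFunctional Φ) (X Y : ℕ → ℕ) (z : ℕ) :
    ∃ n, ∀ X' Y', initSeg X' n = initSeg X n → initSeg Y' n = initSeg Y n →
      Φ X' Y' z = Φ X Y z := by
  obtain ⟨φ, -, hφs, hφc⟩ := hΦ
  obtain ⟨n, hn⟩ := (hφc X Y z).exists
  exact ⟨n, fun X' Y' hX hY => hφs X' Y' n z _ (by rw [hX, hY, hn])⟩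

theorem isSigma11 {Φ : (ℕ → ℕ) → (ℕ → ℕ) → ℕ → Bool} (hΦ : ComputableFunctional Φ) :
    IsSigma11 {X | ∃ Y, ∀ z, Φ X Y z = true} := by
  obtain ⟨φ, hφ, hφs, hφc⟩ := hΦ
  -- at stage `w` the index `w.unpair.1` is checked on segments of length `w`, so every index
  -- is eventually checked on arbitrarily long segments
  refine ⟨fun p => decide (φ (p.1, p.2.1, p.2.2.unpair.1) ≠ some false),
    (Primrec.eq.comp .id (Primrec.const (some false))).not.decide.to_comp.comp
      (hφ.comp (Computable.fst.pair ((Computable.fst.comp .snd).pair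
        (Primrec.fst.comp (Primrec.unpair.comp (Primrec.snd.comp .snd))).to_comp))),
    Set.ext fun X => exists_congr fun Y => ⟨fun h w => ?_, fun h z => ?_⟩⟩
  · refine decide_eq_true fun hw => ?_
    simpa [hφs _ _ _ _ _ hw] using h w.unpair.1
  · obtain ⟨n, hn⟩ := eventually_atTop.1 (hφc X Y z)
    have hw := of_decide_eq_true (h (Nat.pair z n))
    rw [Nat.unpair_pair, hn _ (Nat.right_le_pair z n)] at hw
    simpa using hw

end ComputableFunctional

/-- Constraints on a real `W`, viewed as the array of its rows. Row `0` is the oracle `X`, and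
`cert c a` makes rows `a`, `a + 1`, `a + 2` a point, a witness and a certificate for membership
in the `c`-th `Σ¹₁(X)` set. -/
inductive Constraint
  | cert (c : Code) (a : ℕ)
  | seg (σ : List ℕ)

namespace Constraint

def test : Constraint → (ℕ → ℕ) → ℕ → Bool
  | cert c a, W => certCheck c (row W 0) (row W a) (row W (a + 1)) (row W (a + 2))
  | seg σ, W => fun _ => decide (initSeg W σ.length = σ)

def Holds (a : Constraint) (W : ℕ → ℕ) : Prop := ∀ z, a.test W z = true

def support : Constraint → ℕ
  | cert _ a => a + 3
  | seg σ => σ.length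

theorem holds_cert_iff {c : Code} {a : ℕ} {W : ℕ → ℕ} :
    (cert c a).Holds W ↔ IsCertificate c (row W 0) (row W a) (row W (a + 1)) (row W (a + 2)) :=
  Iff.rfl

theorem holds_seg_iff {σ : List ℕ} {W : ℕ → ℕ} : (seg σ).Holds W ↔ initSeg W σ.length = σ := by
  simp [Holds, test]

theorem computableFunctional_test (a : Constraint) :
    ComputableFunctional fun (_ W : ℕ → ℕ) => a.test W := by
  cases a with
  | seg σ =>
    exact (ComputableFunctional.const σ.length).initSeg_right.comp
      (Primrec.eq.comp .id (Primrec.const σ)).decide.to_comp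
  | cert c a =>
    have hH : ComputableFunctional fun (_ W : ℕ → ℕ) z => W (Nat.pair (a + 2) z) :=
      ((ComputableFunctional.const (a + 2)).comp₂ Primrec₂.natPair.to_comp
        ComputableFunctional.index).apply_right
    have hseg := fun i => ComputableFunctional.index.initSeg_row_right i
    have hcheck : Computable fun q : ℕ × List ℕ × List ℕ × List ℕ × ℕ =>
        decide (evaln q.1.unpair.1 c (encode (q.2.1, encode q.2.2)) = some (encode true)) :=
      (Primrec.eq.comp (primrec_evaln.comp (((Primrec.fst.comp (Primrec.unpair.comp .fst)).pair
        (Primrec.const c)).pair (Primrec.encode.comp ((Primrec.fst.comp .snd).pair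
          (Primrec.encode.comp (Primrec.snd.comp .snd))))))
        (Primrec.const _)).decide.to_comp
    exact (hH.pair (((hH.comp (Primrec.snd.comp Primrec.unpair).to_comp).initSeg_row_right 0).pair
      ((hseg a).pair ((hseg (a + 1)).pair .index)))).comp hcheck

theorem holds_congr {a : Constraint} {V W : ℕ → ℕ}
    (h : ∀ j, j.unpair.1 < a.support → V j = W j) : a.Holds V ↔ a.Holds W := by
  cases a with
  | seg σ =>
    simp only [holds_seg_iff]
    rw [initSeg_eq_initSeg_iff.2 fun j (hj : j < σ.length) =>
      h j ((Nat.unpair_left_le j).trans_lt hj)]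
  | cert c a =>
    have hrow : ∀ i < a + 3, row V i = row W i := fun i hi =>
      funext fun k => h _ (by simpa [support] using hi)
    simp only [holds_cert_iff, hrow 0 (by omega), hrow a (by omega), hrow (a + 1) (by omega),
      hrow (a + 2) (by omega)]

theorem Holds.of_forall_initSeg {a : Constraint} {W : ℕ → ℕ}
    (h : ∀ N, ∃ V, initSeg V N = initSeg W N ∧ a.Holds V) : a.Holds W := fun z => by
  obtain ⟨n, hn⟩ := (computableFunctional_test a).exists_initSeg_eq W W z
  obtain ⟨V, hVW, hV⟩ := h n
  exact hn W V rfl hVW ▸ hV z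

end Constraint

def Satisfies (L : List Constraint) (W : ℕ → ℕ) : Prop := ∀ a ∈ L, a.Holds W

def freshRow (L : List Constraint) : ℕ := (L.map Constraint.support).sum + 1

theorem support_lt_freshRow {L : List Constraint} {a : Constraint} (h : a ∈ L) :
    a.support < freshRow L :=
  Nat.lt_succ_of_le (List.le_sum_of_mem (List.mem_map_of_mem h))

theorem satisfies_iff_forall_all {L : List Constraint} {W : ℕ → ℕ} :
    Satisfies L W ↔ ∀ z, (L.all fun a => a.test W z) = true := by
  simp only [Satisfies, Constraint.Holds, List.all_eq_true]
  exact ⟨fun h z a ha => h a ha z, fun h a ha z => h z a ha⟩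

theorem computableFunctional_all (L : List Constraint) :
    ComputableFunctional fun (_ W : ℕ → ℕ) z => L.all fun a => a.test W z := by
  induction L with
  | nil => exact ComputableFunctional.const true
  | cons a L ih =>
    simpa only [List.all_cons] using
      (a.computableFunctional_test).comp₂ Primrec.and.to_comp ih

def updateRow (W : ℕ → ℕ) (i : ℕ) (U : ℕ → ℕ) : ℕ → ℕ :=
  fun j => if j.unpair.1 = i then U j.unpair.2 else W j

theorem updateRow_apply_of_ne {W U : ℕ → ℕ} {i j : ℕ} (h : j.unpair.1 ≠ i) :
    updateRow W i U j = W j :=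
  if_neg h

theorem row_updateRow_self (W : ℕ → ℕ) (i : ℕ) (U : ℕ → ℕ) : row (updateRow W i U) i = U :=
  funext fun k => by simp [row, updateRow]

theorem row_updateRow_of_ne (W : ℕ → ℕ) {i i' : ℕ} (U : ℕ → ℕ) (h : i' ≠ i) :
    row (updateRow W i U) i' = row W i' :=
  funext fun k => updateRow_apply_of_ne (by simpa using h)

def certRows (W : ℕ → ℕ) (a : ℕ) (Z Y H : ℕ → ℕ) : ℕ → ℕ :=
  updateRow (updateRow (updateRow W a Z) (a + 1) Y) (a + 2) H

theorem certRows_apply_of_lt {W Z Y H : ℕ → ℕ} {a j : ℕ} (h : j.unpair.1 < a) :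
    certRows W a Z Y H j = W j := by
  simp only [certRows, updateRow_apply_of_ne (Nat.ne_of_lt (h.trans (by omega : a < a + 2))),
    updateRow_apply_of_ne (Nat.ne_of_lt (h.trans (by omega : a < a + 1))),
    updateRow_apply_of_ne (Nat.ne_of_lt h)]

theorem row_certRows_self (W : ℕ → ℕ) (a : ℕ) (Z Y H : ℕ → ℕ) : row (certRows W a Z Y H) a = Z := by
  rw [certRows, row_updateRow_of_ne _ _ (by omega), row_updateRow_of_ne _ _ (by omega),
    row_updateRow_self]

theorem holds_cert_certRows {c : Code} {W Z Y H : ℕ → ℕ} {a : ℕ} :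
    (Constraint.cert c a).Holds (certRows W a Z Y H) ↔
      IsCertificate c (row (certRows W a Z Y H) 0) Z Y H := by
  simp only [Constraint.holds_cert_iff, certRows, row_updateRow_self,
    row_updateRow_of_ne _ _ (by omega : a + 1 ≠ a + 2),
    row_updateRow_of_ne _ _ (by omega : a ≠ a + 2),
    row_updateRow_of_ne _ _ (by omega : a ≠ a + 1)]

def certifiedRows (L : List Constraint) (c : Code) : Set (ℕ → ℕ) :=
  {Z | ∃ W, Satisfies (.cert c (freshRow L) :: L) W ∧ row W (freshRow L) = Z}

theorem isSigma11_certifiedRows (L : List Constraint) (c : Code) :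
    IsSigma11 (certifiedRows L c) := by
  have hΦ : ComputableFunctional fun (Z W : ℕ → ℕ) z =>
      ((Constraint.cert c (freshRow L) :: L).all fun a => a.test W z) &&
        decide (W (Nat.pair (freshRow L) z) = Z z) :=
    (computableFunctional_all _).comp₂ Primrec.and.to_comp
      ((((ComputableFunctional.const (freshRow L)).comp₂
        Primrec₂.natPair.to_comp ComputableFunctional.index).apply_right.pair
          ComputableFunctional.index.apply_left).comp
        (Primrec.eq.comp Primrec.fst Primrec.snd).decide.to_comp)
  convert hΦ.isSigma11 using 1
  ext Z
  simp only [certifiedRows, satisfies_iff_forall_all, Bool.and_eq_true, decide_eq_true_eq,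
    forall_and, funext_iff, row]

theorem mem_certifiedRows {L : List Constraint} {c : Code} {W Z Y H : ℕ → ℕ}
    (hW : Satisfies L W) (hH : IsCertificate c (row W 0) Z Y H) : Z ∈ certifiedRows L c := by
  set r := freshRow L
  have hlow : ∀ {j}, j.unpair.1 < r → certRows W r Z Y H j = W j := certRows_apply_of_lt
  have hrow0 : row (certRows W r Z Y H) 0 = row W 0 :=
    funext fun k => hlow (by simp [r, freshRow])
  refine ⟨certRows W r Z Y H, ?_, row_certRows_self ..⟩
  rintro a (_ | ⟨_, ha⟩)
  · rwa [holds_cert_certRows, hrow0]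
  · exact (Constraint.holds_congr fun j hj => hlow (hj.trans (support_lt_freshRow ha))).2 (hW a ha)

theorem Constraint.holds_seg_initSeg_iff {V W : ℕ → ℕ} {N : ℕ} :
    (seg (initSeg W N)).Holds V ↔ initSeg V N = initSeg W N := by
  rw [holds_seg_iff, initSeg_length]

def Decides (C : Set (ℕ → ℕ)) (c : Code) (L : List Constraint) : Prop :=
  (∀ W, Satisfies L W → ∀ Z Y H, ¬IsCertificate c (row W 0) Z Y H) ∨
    ∀ W, Satisfies L W → ∃ Z ∉ C, ∃ Y H, IsCertificate c (row W 0) Z Y H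

theorem exists_extension_decides {C : Set (ℕ → ℕ)} (hC : IsClosed C)
    (hC1 : ¬∃ E : Set (ℕ → ℕ), E.Nonempty ∧ E ⊆ C ∧ IsSigma11 E)
    {L : List Constraint} {W : ℕ → ℕ} (hW : Satisfies L W) (c : Code) (N : ℕ) :
    ∃ L' W', Satisfies L' W' ∧ L ⊆ L' ∧
      (∀ V, Satisfies L' V → initSeg V N = initSeg W' N) ∧ Decides C c L' := by
  by_cases hsub : certifiedRows L c ⊆ C
  · refine ⟨.seg (initSeg W N) :: L, W, ?_, List.subset_cons_self _ _,
      fun V hV => Constraint.holds_seg_initSeg_iff.1 (hV _ List.mem_cons_self), .inl ?_⟩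
    · rintro a (_ | ⟨_, ha⟩)
      exacts [Constraint.holds_seg_initSeg_iff.2 rfl, hW a ha]
    · intro V hV Z Y H hH
      exact hC1 ⟨_, ⟨Z, mem_certifiedRows (fun a ha => hV a (List.mem_cons_of_mem _ ha)) hH⟩,
        hsub, isSigma11_certifiedRows L c⟩
  · obtain ⟨Z, ⟨W', hW', rfl⟩, hZC⟩ := Set.not_subset.1 hsub
    obtain ⟨m, hm⟩ := PiNat.exists_disjoint_cylinder hC hZC
    set r := freshRow L
    set N' := max N (Nat.pair r m)
    refine ⟨.seg (initSeg W' N') :: .cert c r :: L, W', ?_, fun a ha => .tail _ (.tail _ ha),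
      fun V hV => ?_, .inr fun V hV => ⟨row V r, fun hVC => ?_, row V (r + 1), row V (r + 2),
        Constraint.holds_cert_iff.1 (hV _ (.tail _ List.mem_cons_self))⟩⟩
    · rintro a (_ | ⟨_, ha⟩)
      exacts [Constraint.holds_seg_initSeg_iff.2 rfl, hW' a ha]
    · exact initSeg_eq_of_le (Constraint.holds_seg_initSeg_iff.1 (hV _ List.mem_cons_self))
        (le_max_left _ _)
    · have hVW : initSeg (row V r) m = initSeg (row W' r) m :=
        initSeg_row_eq_of_initSeg_eq (initSeg_eq_of_le
          (Constraint.holds_seg_initSeg_iff.1 (hV _ List.mem_cons_self)) (le_max_right _ _))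
      exact Set.disjoint_left.1 hm hVC (PiNat.mem_cylinder_iff.2 (initSeg_eq_initSeg_iff.1 hVW))

theorem exists_satisfies_limit {P : ℕ → List Constraint → Prop}
    (hstep : ∀ n L W, Satisfies L W → ∃ L' W', Satisfies L' W' ∧ L ⊆ L' ∧
      (∀ V, Satisfies L' V → initSeg V (n + 1) = initSeg W' (n + 1)) ∧ P n L')
    {L₀ : List Constraint} {W₀ : ℕ → ℕ} (h₀ : Satisfies L₀ W₀) :
    ∃ W, Satisfies L₀ W ∧ ∀ n, ∃ L, Satisfies L W ∧ P n L := by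
  choose L' W' hsat hsub hfreeze hP using hstep
  let seq : ℕ → {p : List Constraint × (ℕ → ℕ) // Satisfies p.1 p.2} := fun n =>
    Nat.rec ⟨(L₀, W₀), h₀⟩ (fun n s => ⟨(L' n _ _ s.2, W' n _ _ s.2), hsat n _ _ s.2⟩) n
  have hmono : ∀ {n m}, n ≤ m → (seq n).1.1 ⊆ (seq m).1.1 := by
    intro n m h
    induction h with
    | refl => exact List.Subset.refl _
    | step _ ih => exact List.Subset.trans ih (hsub _ _ _ _)
  let W : ℕ → ℕ := fun j => (seq (j + 1)).1.2 j
  have hagree : ∀ {j m}, j < m → (seq m).1.2 j = W j := fun {j m} hjm =>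
    initSeg_eq_initSeg_iff.1 (hfreeze j _ _ (seq j).2 _ fun a ha => (seq m).2 a (hmono hjm ha))
      j (Nat.lt_succ_self j)
  have hlim : ∀ n, Satisfies (seq n).1.1 W := fun n a ha =>
    Constraint.Holds.of_forall_initSeg fun N => ⟨(seq (max n N)).1.2,
      initSeg_eq_initSeg_iff.2 fun j hj => hagree (by omega),
      (seq _).2 a (hmono (le_max_left _ _) ha)⟩
  exact ⟨W, hlim 0, fun n => ⟨_, hlim (n + 1), hP n _ _ (seq n).2⟩⟩

theorem sigma11_immunity_basis_of_isClosed
    {C : Set (ℕ → ℕ)} (hC : IsClosed C)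
    (hC1 : ¬∃ E : Set (ℕ → ℕ), E.Nonempty ∧ E ⊆ C ∧ IsSigma11 E)
    {D : Set (ℕ → ℕ)} (hD : IsSigma11 D) (hDne : D.Nonempty) :
    ∃ X ∈ D, ¬∃ E : Set (ℕ → ℕ), E.Nonempty ∧ E ⊆ C ∧ IsSigma11In X E := by
  obtain ⟨R₀, hR₀, rfl⟩ := hD
  obtain ⟨c₀, hc₀⟩ := Computable.exists_computesFromInitSeg hR₀
  obtain ⟨X₀, Y₀, hX₀⟩ := hDne
  obtain ⟨H₀, hH₀⟩ := exists_isCertificate (hc₀ X₀) hX₀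
  have h₀ : Satisfies [.cert c₀ 0] (certRows 0 0 X₀ Y₀ H₀) := by
    simpa [Satisfies, holds_cert_certRows, row_certRows_self] using hH₀
  obtain ⟨W, hW, hdec⟩ := exists_satisfies_limit
    (fun n _ _ hW => exists_extension_decides hC hC1 hW (Denumerable.ofNat Code n) (n + 1)) h₀
  refine ⟨row W 0,
    ⟨row W 1, (Constraint.holds_cert_iff.1 (hW _ List.mem_cons_self)).sound (hc₀ _)⟩, ?_⟩
  rintro ⟨E, ⟨Z, hZ⟩, hEC, R, hR, rfl⟩
  obtain ⟨c, hc⟩ := hR.exists_computesFromInitSeg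
  obtain ⟨L, hL, hdecides⟩ := hdec (encode c)
  rw [Denumerable.ofNat_encode] at hdecides
  rcases hdecides with hempty | hescape
  · obtain ⟨Y, hY⟩ := hZ
    obtain ⟨H, hH⟩ := exists_isCertificate hc hY
    exact hempty W hL Z Y H hH
  · obtain ⟨Z', hZ'C, Y', H', hH'⟩ := hescape W hL
    exact hZ'C (hEC ⟨Y', hH'.sound hc⟩)

/-- Σ¹₁-immunity basis theorem. For every compact `C ⊆ ω^ω` with no
non-empty `Σ¹₁` subset, and every non-empty `Σ¹₁` set `D ⊆ ω^ω`, there is some `X ∈ D`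
such that `C` has no non-empty `Σ¹₁(X)` subset. -/
theorem sigma11_immunity_basis
    (C : Set (ℕ → ℕ)) (hC : IsCompact C)
    (hC1 : ¬∃ E : Set (ℕ → ℕ), E.Nonempty ∧ E ⊆ C ∧ IsSigma11 E)
    (D : Set (ℕ → ℕ)) (hD : IsSigma11 D) (hDne : D.Nonempty) :
    ∃ X ∈ D, ¬∃ E : Set (ℕ → ℕ), E.Nonempty ∧ E ⊆ C ∧ IsSigma11In X E :=
  sigma11_immunity_basis_of_isClosed hC.isClosed hC1 hD hDne

end Paper
end

section
/- There exists a binary tree T ⊆ 2^{<ω} of positive measure such that the set [T] of infinite paths of T has no non-empty Σ¹₁ subset. (For example, a tree whose paths form a non-empty Π⁰₁(𝒪) class of Martin-Löf randoms relative to Kleene's 𝒪 works, since the sets Turing reducible to Kleene's 𝒪 form a basis for the Σ¹₁ subsets of 2^ω.) -/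
namespace Paper

/-- A binary tree `T ⊆ 2^{<ω}`: a prefix-closed set of binary strings. -/
def IsBinTree (T : Set (List Bool)) : Prop :=
  ∀ σ ∈ T, ∀ τ : List Bool, τ <+: σ → τ ∈ T

/-- `T` has positive measure: `lim_s |{σ ∈ T : |σ| = s}| / 2^s > 0`. -/
def PositiveMeasure (T : Set (List Bool)) : Prop :=
  ∃ c : ℝ, 0 < c ∧
    Filter.Tendsto (fun s : ℕ => ({σ ∈ T | σ.length = s} : Set (List Bool)).ncard / (2 ^ s : ℝ))
      Filter.atTop (nhds c)

/-- The set `[T]` of infinite paths of a binary tree `T`. -/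
def binPaths (T : Set (List Bool)) : Set (ℕ → Bool) :=
  {X | ∀ n : ℕ, (List.ofFn fun i : Fin n => X i) ∈ T}

/-- `D ⊆ 2^ω` is `Σ¹₁`. -/
def IsSigma11Cantor (D : Set (ℕ → Bool)) : Prop :=
  ∃ R : List Bool × List ℕ × ℕ → Bool,
    Computable R ∧
    D = {X | ∃ Y : ℕ → ℕ, ∀ z : ℕ,
      R (List.ofFn fun i : Fin z => X i, initSeg Y z, z) = true}

/-! There are only countably many computable relations, hence only countably many `Σ¹₁` sets.
Pick a point `xₙ` in the `n`-th non-empty one and prune the full binary tree above `xₙ↾(n+2)`.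
At level `s` this removes at most `∑ₙ 2^(s-n-2) ≤ 2^(s-1)` strings, so every level keeps at least
half of its strings; since the level densities of a binary tree decrease, they converge to a
limit `≥ 1/2`. -/

theorem countable_setOf_computable {α β : Type} [Primcodable α] [Primcodable β] :
    {f : α → β | Computable f}.Countable := by
  let F : (α → β) → ℕ →. ℕ := fun f n =>
    Part.bind (Encodable.decode (α := α) n) fun a => (f a : Part β).map Encodable.encode
  have hF : Function.Injective F := fun f g hfg => funext fun a => by
    simpa [F, Encodable.encodek] using congrFun hfg (Encodable.encode a)
  exact ((Set.countable_range Nat.Partrec.Code.eval).preimage hF).mono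
    fun f hf => Nat.Partrec.Code.exists_code.mp hf

theorem countable_setOf_isSigma11Cantor : {D | IsSigma11Cantor D}.Countable := by
  refine (countable_setOf_computable.image fun R : List Bool × List ℕ × ℕ → Bool =>
    {X : ℕ → Bool | ∃ Y : ℕ → ℕ, ∀ z,
      R (List.ofFn fun i : Fin z => X i, initSeg Y z, z) = true}).mono ?_
  rintro D ⟨R, hR, rfl⟩
  exact ⟨R, hR, rfl⟩

theorem ncard_setOf_length_eq (α : Type) [Fintype α] (s : ℕ) :
    {σ : List α | σ.length = s}.ncard = Fintype.card α ^ s := by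
  rw [← Nat.card_coe_set_eq]
  exact (Nat.card_eq_fintype_card (α := List.Vector α s)).trans (card_vector s)

theorem ncard_setOf_length_eq_and_prefix_mul_le {α : Type} [Fintype α] (ρ : List α) (s : ℕ) :
    {σ : List α | σ.length = s ∧ ρ <+: σ}.ncard * Fintype.card α ^ ρ.length
      ≤ Fintype.card α ^ s := by
  by_cases hρ : ρ.length ≤ s
  · have hext : {σ : List α | σ.length = s ∧ ρ <+: σ}
        = (ρ ++ ·) '' {τ : List α | τ.length = s - ρ.length} := by
      ext σ
      constructor
      · rintro ⟨rfl, τ, rfl⟩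
        exact ⟨τ, by simp, rfl⟩
      · rintro ⟨τ, (hτ : τ.length = s - ρ.length), rfl⟩
        exact ⟨by simp; omega, τ, rfl⟩
    rw [hext, Set.ncard_image_of_injective _ (List.append_right_injective ρ), ncard_setOf_length_eq,
      pow_sub_mul_pow _ hρ]
  · have hempty : {σ : List α | σ.length = s ∧ ρ <+: σ} = ∅ :=
      Set.eq_empty_of_forall_notMem fun σ ⟨hσ, hpre⟩ => hρ (hσ ▸ hpre.length_le)
    simp [hempty]

namespace IsBinTree

variable {T : Set (List Bool)}

theorem ncard_level_succ_le (hT : IsBinTree T) (s : ℕ) :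
    {σ ∈ T | σ.length = s + 1}.ncard ≤ 2 * {σ ∈ T | σ.length = s}.ncard := by
  have hsub : {σ ∈ T | σ.length = s + 1}
      ⊆ (fun p : List Bool × Bool => p.1 ++ [p.2]) '' ({σ ∈ T | σ.length = s} ×ˢ Set.univ) := by
    rintro σ ⟨hσ, hlen⟩
    obtain rfl | ⟨τ, b, rfl⟩ := σ.eq_nil_or_concat'
    · simp at hlen
    · exact ⟨(τ, b), ⟨⟨hT _ hσ τ (List.prefix_append τ [b]), by simpa using hlen⟩, trivial⟩, rfl⟩
  have hfin : {σ ∈ T | σ.length = s}.Finite := (List.finite_length_eq Bool s).subset fun σ h => h.2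
  calc {σ ∈ T | σ.length = s + 1}.ncard
      ≤ ((fun p : List Bool × Bool => p.1 ++ [p.2]) ''
          ({σ ∈ T | σ.length = s} ×ˢ Set.univ)).ncard :=
        Set.ncard_le_ncard hsub ((hfin.prod Set.finite_univ).image _)
    _ ≤ ({σ ∈ T | σ.length = s} ×ˢ (Set.univ : Set Bool)).ncard :=
        Set.ncard_image_le (hfin.prod Set.finite_univ)
    _ = 2 * {σ ∈ T | σ.length = s}.ncard := by
        rw [Set.ncard_prod, Set.ncard_univ, Nat.card_eq_fintype_card, Fintype.card_bool, mul_comm]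

theorem antitone_levelDensity (hT : IsBinTree T) :
    Antitone fun s : ℕ => ({σ ∈ T | σ.length = s}.ncard : ℝ) / 2 ^ s := by
  refine antitone_nat_of_succ_le fun s => ?_
  have hstep : ({σ ∈ T | σ.length = s + 1}.ncard : ℝ) ≤ 2 * {σ ∈ T | σ.length = s}.ncard := by
    exact_mod_cast hT.ncard_level_succ_le s
  rw [div_le_div_iff₀ (by positivity) (by positivity), pow_succ]
  nlinarith [pow_pos (two_pos : (0 : ℝ) < 2) s]

theorem positiveMeasure_of_le_levelDensity (hT : IsBinTree T) {c : ℝ} (hc : 0 < c)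
    (hle : ∀ s : ℕ, c ≤ ({σ ∈ T | σ.length = s}.ncard : ℝ) / 2 ^ s) : PositiveMeasure T :=
  ⟨_, hc.trans_le (le_ciInf hle),
    tendsto_atTop_ciInf hT.antitone_levelDensity ⟨c, by rintro _ ⟨s, rfl⟩; exact hle s⟩⟩

end IsBinTree

def avoidTree (ρ : ℕ → List Bool) : Set (List Bool) := {σ | ∀ n, ¬ρ n <+: σ}

theorem isBinTree_avoidTree (ρ : ℕ → List Bool) : IsBinTree (avoidTree ρ) :=
  fun _ hσ _ hτ n hn => hσ n (hn.trans hτ)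

theorem ncard_biUnion_prefix_level_le {ρ : ℕ → List Bool} (hρ : ∀ n, n + 2 ≤ (ρ n).length)
    (s : ℕ) :
    ((⋃ n ∈ Finset.range s, {σ : List Bool | σ.length = s ∧ ρ n <+: σ}).ncard : ℝ) ≤ 2 ^ s / 2 := by
  have hcyl (n : ℕ) :
      ({σ : List Bool | σ.length = s ∧ ρ n <+: σ}.ncard : ℝ) ≤ 2 ^ s / 4 * (1 / 2) ^ n := by
    have h := ncard_setOf_length_eq_and_prefix_mul_le (ρ n) s
    rw [Fintype.card_bool] at h
    have h' : ({σ : List Bool | σ.length = s ∧ ρ n <+: σ}.ncard : ℝ) * 2 ^ (n + 2) ≤ 2 ^ s :=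
      calc _ ≤ ({σ : List Bool | σ.length = s ∧ ρ n <+: σ}.ncard : ℝ) * 2 ^ (ρ n).length := by
            gcongr
            · norm_num
            · exact hρ n
        _ ≤ 2 ^ s := by exact_mod_cast h
    rw [← le_div_iff₀ (by positivity)] at h'
    exact h'.trans_eq (by rw [pow_add, one_div, inv_pow]; ring)
  calc _ ≤ ∑ n ∈ Finset.range s, ({σ : List Bool | σ.length = s ∧ ρ n <+: σ}.ncard : ℝ) := by
        exact_mod_cast Finset.set_ncard_biUnion_le _ _
    _ ≤ ∑ n ∈ Finset.range s, 2 ^ s / 4 * (1 / 2) ^ n := Finset.sum_le_sum fun n _ => hcyl n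
    _ ≤ 2 ^ s / 4 * 2 := by rw [← Finset.mul_sum]; gcongr; exact sum_geometric_two_le s
    _ = 2 ^ s / 2 := by ring

theorem half_le_levelDensity_avoidTree {ρ : ℕ → List Bool} (hρ : ∀ n, n + 2 ≤ (ρ n).length)
    (s : ℕ) : 1 / 2 ≤ ({σ ∈ avoidTree ρ | σ.length = s}.ncard : ℝ) / 2 ^ s := by
  let bad := ⋃ n ∈ Finset.range s, {σ : List Bool | σ.length = s ∧ ρ n <+: σ}
  have hcover : {σ : List Bool | σ.length = s} ⊆ {σ ∈ avoidTree ρ | σ.length = s} ∪ bad := by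
    intro σ (hσ : σ.length = s)
    by_cases hgood : σ ∈ avoidTree ρ
    · exact Or.inl ⟨hgood, hσ⟩
    · obtain ⟨n, hn⟩ : ∃ n, ρ n <+: σ := by simpa [avoidTree] using hgood
      have hns : n < s := by have := hρ n; have := hn.length_le; omega
      exact Or.inr (Set.mem_biUnion (Finset.mem_range.mpr hns) ⟨hσ, hn⟩)
  have hfin : ({σ ∈ avoidTree ρ | σ.length = s} ∪ bad).Finite :=
    (List.finite_length_eq Bool s).subset
      (Set.union_subset (fun _ h => h.2) (Set.iUnion₂_subset fun _ _ _ h => h.1))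
  have hsplit : (2 : ℝ) ^ s ≤ {σ ∈ avoidTree ρ | σ.length = s}.ncard + bad.ncard := by
    have h := (Set.ncard_le_ncard hcover hfin).trans (Set.ncard_union_le _ _)
    rw [ncard_setOf_length_eq, Fintype.card_bool] at h
    exact_mod_cast h
  rw [le_div_iff₀ (by positivity)]
  linarith [ncard_biUnion_prefix_level_le hρ s]

theorem exists_isBinTree_positiveMeasure_disjoint_binPaths {P : Set (ℕ → Bool)}
    (hP : P.Countable) : ∃ T, IsBinTree T ∧ PositiveMeasure T ∧ Disjoint (binPaths T) P := by
  obtain ⟨x, hx⟩ := Set.countable_iff_exists_subset_range.mp hP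
  let ρ : ℕ → List Bool := fun n => List.ofFn fun i : Fin (n + 2) => x n i
  refine ⟨avoidTree ρ, isBinTree_avoidTree ρ,
    (isBinTree_avoidTree ρ).positiveMeasure_of_le_levelDensity one_half_pos
      (half_le_levelDensity_avoidTree fun n => by simp [ρ]), ?_⟩
  refine Set.disjoint_left.mpr fun X hX hXP => ?_
  obtain ⟨n, rfl⟩ := hx hXP
  exact hX (n + 2) n (List.prefix_refl _)

/-- There exists a binary tree `T ⊆ 2^{<ω}` of positive measure such
that `[T]` has no non-empty `Σ¹₁` subset. -/
theorem exists_posMeasure_tree_no_sigma11_subset :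
    ∃ T : Set (List Bool), IsBinTree T ∧ PositiveMeasure T ∧
      ¬∃ D : Set (ℕ → Bool), D.Nonempty ∧ D ⊆ binPaths T ∧ IsSigma11Cantor D := by
  let S := {D : Set (ℕ → Bool) | D.Nonempty ∧ IsSigma11Cantor D}
  have hS : S.Countable := countable_setOf_isSigma11Cantor.mono fun _ hD => hD.2
  have : Countable S := hS.to_subtype
  obtain ⟨T, hT, hpos, hdisj⟩ :=
    exists_isBinTree_positiveMeasure_disjoint_binPaths (Set.countable_range fun D : S => D.2.1.some)
  refine ⟨T, hT, hpos, ?_⟩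
  rintro ⟨D, hne, hsub, hD⟩
  exact Set.disjoint_left.mp hdisj (hsub hne.some_mem) ⟨⟨D, hne, hD⟩, rfl⟩

end Paper
end

section
/- Let k ≥ 1 and let f : [ω]² → k be a stable coloring, i.e., lim_s f(x, s) exists for every x. Define g : [ω]² → 2 by g(x, y) = 1 if f(x, y) = lim_s f(y, s) (for x < y), and g(x, y) = 0 otherwise. Then every infinite g-homogeneous set H is g-homogeneous for color 1 and is f-homogeneous. (Hence srt²_{<∞} is strongly omnisciently computably reducible to rt²₂.) -/
namespace Paper

/-!
The limit colors take finitely many values, so some limit color `d` is shared by infinitely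
many `y ∈ H`. For such `x < y` with `y` beyond the stabilization point of `x`,
`f x y = L x = d = L y`, so `g x y = 1` and the homogeneous color is `1`. Then
`f x y = L y` for all `x < y` in `H`; comparing two elements of `H` with a common large
`z ∈ H` shows that `L` is constant on `H`, hence so is `f`.
-/

open Filter

variable {α : Type*} {f : ℕ → ℕ → α} {L : ℕ → α} {H : Set ℕ}

theorem exists_infinite_inter_preimage_singleton {β : Type*} [Finite α] {s : Set β}
    (hs : s.Infinite) (p : β → α) : ∃ d, (s ∩ p ⁻¹' {d}).Infinite := by
  by_contra! h
  exact hs <| (Set.finite_iUnion h).subset fun y hy => Set.mem_iUnion.2 ⟨p y, hy, rfl⟩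

theorem exists_mem_lt_apply_eq_lim [Finite α] (hL : ∀ x, ∀ᶠ s in atTop, f x s = L x)
    (hH : H.Infinite) : ∃ x ∈ H, ∃ y ∈ H, x < y ∧ f x y = L y := by
  obtain ⟨d, hd⟩ := exists_infinite_inter_preimage_singleton hH L
  obtain ⟨x, hxH, hxd⟩ := hd.nonempty
  obtain ⟨y, ⟨hyH, hyd⟩, hxy, hfy⟩ :=
    ((Nat.frequently_atTop_iff_infinite.2 hd).and_eventually
      ((eventually_gt_atTop x).and (hL x))).exists
  exact ⟨x, hxH, y, hyH, hxy, hfy.trans (hxd.trans hyd.symm)⟩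

theorem lim_eq_of_forall_apply_eq_lim (hL : ∀ x, ∀ᶠ s in atTop, f x s = L x)
    (hH : H.Infinite) (h : ∀ x ∈ H, ∀ y ∈ H, x < y → f x y = L y) {x x' : ℕ}
    (hx : x ∈ H) (hx' : x' ∈ H) : L x = L x' := by
  obtain ⟨z, hzH, ⟨hxz, hfx⟩, hx'z, hfx'⟩ :=
    ((Nat.frequently_atTop_iff_infinite.2 hH).and_eventually
      (((eventually_gt_atTop x).and (hL x)).and ((eventually_gt_atTop x').and (hL x')))).exists
  calc L x = f x z := hfx.symm
    _ = L z := h x hx z hzH hxz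
    _ = f x' z := (h x' hx' z hzH hx'z).symm
    _ = L x' := hfx'

theorem stable_reduction_homogeneous_general
    (k : ℕ) (f : ℕ → ℕ → Fin k)
    (L : ℕ → Fin k) (hL : ∀ x : ℕ, ∀ᶠ s in Filter.atTop, f x s = L x)
    (g : ℕ → ℕ → Fin 2)
    (hg : ∀ x y : ℕ, x < y → (g x y = 1 ↔ f x y = L y))
    (H : Set ℕ) (hH : H.Infinite)
    (hom : ∃ c : Fin 2, ∀ x ∈ H, ∀ y ∈ H, x < y → g x y = c) :
    (∀ x ∈ H, ∀ y ∈ H, x < y → g x y = 1) ∧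
      ∃ c : Fin k, ∀ x ∈ H, ∀ y ∈ H, x < y → f x y = c := by
  obtain ⟨c, hc⟩ := hom
  obtain ⟨x, hx, y, hy, hxy, hf⟩ := exists_mem_lt_apply_eq_lim hL hH
  obtain rfl : c = 1 := (hc x hx y hy hxy).symm.trans ((hg x y hxy).2 hf)
  have hfL : ∀ x ∈ H, ∀ y ∈ H, x < y → f x y = L y :=
    fun x hx y hy hxy => (hg x y hxy).1 (hc x hx y hy hxy)
  exact ⟨hc, L y, fun x' hx' y' hy' hxy' =>
    (hfL x' hx' y' hy' hxy').trans (lim_eq_of_forall_apply_eq_lim hL hH hfL hy' hy)⟩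

/-- Let `f : [ω]² → k` be a stable coloring with limit colors `L`,
and let `g : [ω]² → 2` be defined by `g(x,y) = 1` iff `f(x,y) = lim_s f(y,s)` (for
`x < y`). Then every infinite `g`-homogeneous set `H` is `g`-homogeneous for color `1`
and is `f`-homogeneous. -/
theorem stable_reduction_homogeneous
    (k : ℕ) (hk : 1 ≤ k) (f : ℕ → ℕ → Fin k)
    (L : ℕ → Fin k) (hL : ∀ x : ℕ, ∀ᶠ s in Filter.atTop, f x s = L x)
    (g : ℕ → ℕ → Fin 2)
    (hg : ∀ x y : ℕ, x < y → (g x y = 1 ↔ f x y = L y))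
    (H : Set ℕ) (hH : H.Infinite)
    (hom : ∃ c : Fin 2, ∀ x ∈ H, ∀ y ∈ H, x < y → g x y = c) :
    (∀ x ∈ H, ∀ y ∈ H, x < y → g x y = 1) ∧
      ∃ c : Fin k, ∀ x ∈ H, ∀ y ∈ H, x < y → f x y = c :=
  stable_reduction_homogeneous_general k f L hL g hg H hH hom

end Paper
end
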